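/- Let ε > 0, y ∈ ℝⁿ, λ ∈ ℝⁿ with λᵢ ≥ 0, and let D : ℝⁿ → (ℝ²)ⁿ be a linear map. Then for every x ∈ ℝⁿ, the Hessian of F_ε(x) = ½‖x − y‖₂² + Σᵢ λᵢ h_ε((Dx)ᵢ) satisfies ⟨∇²F_ε(x) w, w⟩ ≥ ‖w‖₂² for all w ∈ ℝⁿ, i.e. ∇²F_ε(x) − I is positive semidefinite at every point. -/

import Mathlib

open RealInnerProductSpace

/-- The Huber-type smoothing of the Euclidean norm on ℝ². -/
noncomputable def huber (ε : ℝ) (v : EuclideanSpace ℝ (Fin 2)) : ℝ :=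
  if ‖v‖ < ε then 3 / (4 * ε) * ‖v‖ ^ 2 - 1 / (8 * ε ^ 3) * ‖v‖ ^ 4
  else ‖v‖ - 3 * ε / 8

/-- The smoothed weighted-TV denoising functional
`F_ε(x) = ½‖x − y‖² + Σᵢ λᵢ h_ε((Dx)ᵢ)`. -/
noncomputable def Feps {n : ℕ} (ε : ℝ) (y : EuclideanSpace ℝ (Fin n)) (lam : Fin n → ℝ)
    (D : Fin n → (EuclideanSpace ℝ (Fin n) →L[ℝ] EuclideanSpace ℝ (Fin 2)))
    (x : EuclideanSpace ℝ (Fin n)) : ℝ :=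
  1 / 2 * ‖x - y‖ ^ 2 + ∑ i, lam i * huber ε (D i x)

noncomputable def psiH (ε s : ℝ) : ℝ :=
  if s < ε ^ 2 then 3 / (4 * ε) * s - 1 / (8 * ε ^ 3) * s ^ 2 else Real.sqrt s - 3 * ε / 8

noncomputable def phiH (ε s : ℝ) : ℝ :=
  if s < ε ^ 2 then 3 / (2 * ε) - s / (2 * ε ^ 3) else (Real.sqrt s)⁻¹

noncomputable def phiH' (ε s : ℝ) : ℝ :=
  if s < ε ^ 2 then -(1 / (2 * ε ^ 3)) else -(1 / (2 * Real.sqrt s ^ 3))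

lemma huber_eq_psiH {ε : ℝ} (hε : 0 < ε) (v : EuclideanSpace ℝ (Fin 2)) :
    huber ε v = psiH ε (‖v‖ ^ 2) := by
  unfold huber psiH
  have hiff : ‖v‖ ^ 2 < ε ^ 2 ↔ ‖v‖ < ε := pow_lt_pow_iff_left₀ (norm_nonneg v) hε.le two_ne_zero
  by_cases h : ‖v‖ < ε
  · rw [if_pos h, if_pos (hiff.mpr h)]; ring
  · rw [if_neg h, if_neg (fun hc => h (hiff.mp hc)), Real.sqrt_sq (norm_nonneg v)]

lemma hasDerivAt_psiH {ε : ℝ} (hε : 0 < ε) {s : ℝ} (hs : 0 ≤ s) :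
    HasDerivAt (psiH ε) (phiH ε s / 2) s := by
  have hε2 : (0:ℝ) < ε ^ 2 := by positivity
  have hpoly : ∀ t : ℝ, HasDerivAt (fun u => 3 / (4 * ε) * u - 1 / (8 * ε ^ 3) * u ^ 2)
      (3 / (4 * ε) * 1 - 1 / (8 * ε ^ 3) * (((2:ℕ):ℝ) * t ^ (2 - 1))) t := fun t =>
    ((hasDerivAt_id t).const_mul (3 / (4 * ε))).sub
      ((hasDerivAt_pow 2 t).const_mul (1 / (8 * ε ^ 3)))
  rcases lt_trichotomy s (ε ^ 2) with h | h | h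
  · have heq : psiH ε =ᶠ[nhds s] (fun u => 3 / (4 * ε) * u - 1 / (8 * ε ^ 3) * u ^ 2) :=
      Filter.eventuallyEq_of_mem (Iio_mem_nhds h) (fun t ht => if_pos ht)
    have := (hpoly s).congr_of_eventuallyEq heq
    refine this.congr_deriv (Eq.symm ?_)
    rw [phiH, if_pos h]; push_cast; field_simp; ring
  · subst h
    have hval : phiH ε (ε ^ 2) / 2
        = 3 / (4 * ε) * 1 - 1 / (8 * ε ^ 3) * (((2:ℕ):ℝ) * (ε ^ 2) ^ (2 - 1)) := by
      rw [phiH, if_neg (lt_irrefl _), Real.sqrt_sq hε.le]; push_cast; field_simp; ring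
    have hL : HasDerivWithinAt (psiH ε) (phiH ε (ε ^ 2) / 2) (Set.Iic (ε ^ 2)) (ε ^ 2) := by
      rw [hval]
      refine ((hpoly (ε ^ 2)).hasDerivWithinAt).congr (fun t ht => ?_) ?_
      · rcases lt_or_eq_of_le (Set.mem_Iic.mp ht) with h' | h'
        · rw [psiH, if_pos h']
        · subst h'; rw [psiH, if_neg (lt_irrefl _), Real.sqrt_sq hε.le]; field_simp; ring
      · rw [psiH, if_neg (lt_irrefl _), Real.sqrt_sq hε.le]; field_simp; ring
    have hR : HasDerivWithinAt (psiH ε) (phiH ε (ε ^ 2) / 2) (Set.Ici (ε ^ 2)) (ε ^ 2) := by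
      have hsq : HasDerivAt (fun u => Real.sqrt u - 3 * ε / 8) (1 / (2 * Real.sqrt (ε ^ 2)))
          (ε ^ 2) := (Real.hasDerivAt_sqrt hε2.ne').sub_const _
      have hval2 : phiH ε (ε ^ 2) / 2 = 1 / (2 * Real.sqrt (ε ^ 2)) := by
        rw [phiH, if_neg (lt_irrefl _)]; field_simp
      rw [hval2]
      exact hsq.hasDerivWithinAt.congr (fun t ht => by rw [psiH, if_neg (not_lt.2 ht)])
        (by rw [psiH, if_neg (lt_irrefl _)])
    have := hL.union hR
    rwa [Set.Iic_union_Ici, hasDerivWithinAt_univ] at this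
  · have hs0 : (0:ℝ) < s := lt_trans hε2 h
    have heq : psiH ε =ᶠ[nhds s] (fun u => Real.sqrt u - 3 * ε / 8) :=
      Filter.eventuallyEq_of_mem (Ioi_mem_nhds h) (fun t ht => if_neg (not_lt.2 (le_of_lt ht)))
    have := ((Real.hasDerivAt_sqrt hs0.ne').sub_const (3 * ε / 8)).congr_of_eventuallyEq heq
    refine this.congr_deriv (Eq.symm ?_)
    rw [phiH, if_neg (not_lt.2 h.le)]; field_simp

lemma hasDerivAt_phiH {ε : ℝ} (hε : 0 < ε) {s : ℝ} (hs : 0 ≤ s) :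
    HasDerivAt (phiH ε) (phiH' ε s) s := by
  have hε2 : (0:ℝ) < ε ^ 2 := by positivity
  have hpoly : ∀ t : ℝ, HasDerivAt (fun u => 3 / (2 * ε) - u / (2 * ε ^ 3))
      (-(1 / (2 * ε ^ 3))) t := fun t =>
    ((hasDerivAt_id t).div_const (2 * ε ^ 3)).const_sub (3 / (2 * ε))
  have hsqinv : ∀ t : ℝ, 0 < t → HasDerivAt (fun u => (Real.sqrt u)⁻¹)
      (-(1 / (2 * Real.sqrt t ^ 3))) t := fun t ht => by
    have hq : 0 < Real.sqrt t := Real.sqrt_pos.mpr ht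
    have h2 : Real.sqrt t ^ 2 = t := Real.sq_sqrt ht.le
    have := (Real.hasDerivAt_sqrt ht.ne').inv hq.ne'
    refine this.congr_deriv (Eq.symm ?_)
    rw [neg_div, div_div]
    congr 2
    ring
  rcases lt_trichotomy s (ε ^ 2) with h | h | h
  · have heq : phiH ε =ᶠ[nhds s] (fun u => 3 / (2 * ε) - u / (2 * ε ^ 3)) :=
      Filter.eventuallyEq_of_mem (Iio_mem_nhds h) (fun t ht => if_pos ht)
    have := (hpoly s).congr_of_eventuallyEq heq
    refine this.congr_deriv (Eq.symm ?_)
    rw [phiH', if_pos h]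
  · subst h
    have hq : Real.sqrt (ε ^ 2) = ε := Real.sqrt_sq hε.le
    have hval : phiH' ε (ε ^ 2) = -(1 / (2 * ε ^ 3)) := by
      rw [phiH', if_neg (lt_irrefl _), hq]
    have hL : HasDerivWithinAt (phiH ε) (phiH' ε (ε ^ 2)) (Set.Iic (ε ^ 2)) (ε ^ 2) := by
      rw [hval]
      refine ((hpoly (ε ^ 2)).hasDerivWithinAt).congr (fun t ht => ?_) ?_
      · rcases lt_or_eq_of_le (Set.mem_Iic.mp ht) with h' | h'
        · rw [phiH, if_pos h']
        · subst h'; rw [phiH, if_neg (lt_irrefl _), hq]; field_simp; ring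
      · rw [phiH, if_neg (lt_irrefl _), hq]; field_simp; ring
    have hR : HasDerivWithinAt (phiH ε) (phiH' ε (ε ^ 2)) (Set.Ici (ε ^ 2)) (ε ^ 2) := by
      have hval2 : phiH' ε (ε ^ 2) = -(1 / (2 * Real.sqrt (ε ^ 2) ^ 3)) := by
        rw [phiH', if_neg (lt_irrefl _)]
      rw [hval2]
      exact (hsqinv (ε ^ 2) hε2).hasDerivWithinAt.congr
        (fun t ht => by rw [phiH, if_neg (not_lt.2 ht)])
        (by rw [phiH, if_neg (lt_irrefl _)])
    have := hL.union hR
    rwa [Set.Iic_union_Ici, hasDerivWithinAt_univ] at this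
  · have hs0 : (0:ℝ) < s := lt_trans hε2 h
    have heq : phiH ε =ᶠ[nhds s] (fun u => (Real.sqrt u)⁻¹) :=
      Filter.eventuallyEq_of_mem (Ioi_mem_nhds h) (fun t ht => if_neg (not_lt.2 (le_of_lt ht)))
    have := (hsqinv s hs0).congr_of_eventuallyEq heq
    refine this.congr_deriv (Eq.symm ?_)
    rw [phiH', if_neg (not_lt.2 h.le)]

lemma phiH_nonneg {ε : ℝ} (hε : 0 < ε) {s : ℝ} (hs : 0 ≤ s) : 0 ≤ phiH ε s := by
  rw [phiH]
  split_ifs with h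
  · rw [sub_nonneg, div_le_div_iff₀ (by positivity) (by positivity)]
    nlinarith
  · positivity

lemma phiH'_nonpos {ε : ℝ} (hε : 0 < ε) (s : ℝ) : phiH' ε s ≤ 0 := by
  rw [phiH']
  split_ifs with h
  · simp only [neg_nonpos]; positivity
  · simp only [neg_nonpos]
    positivity

lemma phiH_key {ε : ℝ} (hε : 0 < ε) {s : ℝ} (hs : 0 ≤ s) :
    0 ≤ 2 * phiH' ε s * s + phiH ε s := by
  rw [phiH, phiH']
  split_ifs with h
  · have heq : 2 * -(1 / (2 * ε ^ 3)) * s + (3 / (2 * ε) - s / (2 * ε ^ 3))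
        = (3 * ε ^ 2 - 3 * s) / (2 * ε ^ 3) := by field_simp; ring
    rw [heq]
    apply div_nonneg (by nlinarith) (by positivity)
  · have hs0 : (0:ℝ) < s := lt_of_lt_of_le (by positivity) (not_lt.1 h)
    have hq : 0 < Real.sqrt s := Real.sqrt_pos.mpr hs0
    have h2 : Real.sqrt s ^ 2 = s := Real.sq_sqrt hs0.le
    have : 2 * -(1 / (2 * Real.sqrt s ^ 3)) * s + (Real.sqrt s)⁻¹ = 0 := by
      have hq3 : Real.sqrt s ^ 3 = Real.sqrt s * s := by
        rw [show Real.sqrt s ^ 3 = Real.sqrt s * Real.sqrt s ^ 2 by ring, h2]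
      rw [hq3]; field_simp; ring
    rw [this]

lemma gradient_Feps {n : ℕ} {ε : ℝ} (hε : 0 < ε) (y : EuclideanSpace ℝ (Fin n))
    (lam : Fin n → ℝ)
    (D : Fin n → (EuclideanSpace ℝ (Fin n) →L[ℝ] EuclideanSpace ℝ (Fin 2))) :
    gradient (Feps ε y lam D) = fun x =>
      (x - y) + ∑ i, lam i •
        ((ContinuousLinearMap.adjoint (D i)) (phiH ε (‖D i x‖ ^ 2) • (D i x))) := by
  apply gradient_eq
  intro x
  have hFrw : Feps ε y lam D
      = fun z => 1 / 2 * ‖z - y‖ ^ 2 + ∑ i, lam i * psiH ε (‖D i z‖ ^ 2) := by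
    funext z; unfold Feps; simp only [huber_eq_psiH hε]
  rw [hFrw]
  have h0 : HasFDerivAt (fun z : EuclideanSpace ℝ (Fin n) => 1 / 2 * ‖z - y‖ ^ 2)
      ((1 / 2 : ℝ) • (2 • (innerSL ℝ (x - y)).comp
        (ContinuousLinearMap.id ℝ (EuclideanSpace ℝ (Fin n))))) x :=
    (((hasFDerivAt_id x).sub_const y).norm_sq).const_mul (1 / 2)
  have hterm : ∀ i : Fin n,
      HasFDerivAt (fun z : EuclideanSpace ℝ (Fin n) => lam i * psiH ε (‖D i z‖ ^ 2))
        (lam i • ((phiH ε (‖D i x‖ ^ 2) / 2) • (2 • (innerSL ℝ (D i x)).comp (D i)))) x := by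
    intro i
    have hn : HasFDerivAt (fun z : EuclideanSpace ℝ (Fin n) => ‖D i z‖ ^ 2)
        (2 • (innerSL ℝ (D i x)).comp (D i)) x := (D i).hasFDerivAt.norm_sq
    exact ((hasDerivAt_psiH hε (by positivity)).comp_hasFDerivAt x hn).const_mul (lam i)
  have htot := h0.fun_add (HasFDerivAt.fun_sum (fun i (_ : i ∈ Finset.univ) => hterm i))
  rw [hasGradientAt_iff_hasFDerivAt]
  refine htot.congr_fderiv (Eq.symm ?_)
  ext w
  simp only [InnerProductSpace.toDual_apply_apply, ContinuousLinearMap.add_apply,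
    ContinuousLinearMap.coe_smul', Pi.smul_apply, ContinuousLinearMap.smul_apply,
    ContinuousLinearMap.coe_comp', Function.comp_apply, ContinuousLinearMap.coe_id', id_eq,
    innerSL_apply_apply, smul_eq_mul, ContinuousLinearMap.coe_sum', Finset.sum_apply,
    inner_add_left, sum_inner, real_inner_smul_left, ContinuousLinearMap.adjoint_inner_left]
  congr 1
  · ring
  · apply Finset.sum_congr rfl
    intro i _
    ring

/-- The Hessian `∇²F_ε(x)` (the derivative of the gradient) satisfies
`⟨∇²F_ε(x) w, w⟩ ≥ ‖w‖²` for all `w`, i.e. `∇²F_ε(x) − I ⪰ 0` at every point. -/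
theorem stmt_10 {n : ℕ} (ε : ℝ) (hε : 0 < ε) (y : EuclideanSpace ℝ (Fin n))
    (lam : Fin n → ℝ) (hlam : ∀ i, 0 ≤ lam i)
    (D : Fin n → (EuclideanSpace ℝ (Fin n) →L[ℝ] EuclideanSpace ℝ (Fin 2))) :
    ∀ x w : EuclideanSpace ℝ (Fin n),
      ‖w‖ ^ 2 ≤ ⟪(fderiv ℝ (gradient (Feps ε y lam D)) x) w, w⟫ := by
  intro x w
  rw [gradient_Feps hε y lam D]
  have hterm : ∀ i : Fin n,
      HasFDerivAt (fun z : EuclideanSpace ℝ (Fin n) =>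
          lam i • ((ContinuousLinearMap.adjoint (D i)) (phiH ε (‖D i z‖ ^ 2) • (D i z))))
        (lam i • ((ContinuousLinearMap.adjoint (D i)).comp
          (phiH ε (‖D i x‖ ^ 2) • (D i)
            + ((phiH' ε (‖D i x‖ ^ 2)) • (2 • (innerSL ℝ (D i x)).comp (D i))).smulRight
                (D i x)))) x := by
    intro i
    have hn : HasFDerivAt (fun z : EuclideanSpace ℝ (Fin n) => ‖D i z‖ ^ 2)
        (2 • (innerSL ℝ (D i x)).comp (D i)) x := (D i).hasFDerivAt.norm_sq
    have hc : HasFDerivAt (fun z : EuclideanSpace ℝ (Fin n) => phiH ε (‖D i z‖ ^ 2))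
        ((phiH' ε (‖D i x‖ ^ 2)) • (2 • (innerSL ℝ (D i x)).comp (D i))) x :=
      (hasDerivAt_phiH hε (by positivity)).comp_hasFDerivAt x hn
    have hm := hc.smul (D i).hasFDerivAt
    exact ((ContinuousLinearMap.adjoint (D i)).hasFDerivAt.comp x hm).const_smul (lam i)
  have htot := ((hasFDerivAt_id x).sub_const y).fun_add
    (HasFDerivAt.fun_sum (fun i (_ : i ∈ Finset.univ) => hterm i))
  simp only [id_eq] at htot
  rw [htot.fderiv]
  simp only [ContinuousLinearMap.add_apply, ContinuousLinearMap.coe_id', id_eq,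
    ContinuousLinearMap.coe_sum', Finset.sum_apply, ContinuousLinearMap.coe_smul',
    Pi.smul_apply, ContinuousLinearMap.coe_comp', Function.comp_apply,
    ContinuousLinearMap.smulRight_apply, ContinuousLinearMap.smul_apply,
    innerSL_apply_apply, smul_eq_mul, nsmul_eq_mul, Nat.cast_ofNat]
  rw [inner_add_left, sum_inner, real_inner_self_eq_norm_sq]
  have hsum : 0 ≤ ∑ i : Fin n, ⟪lam i • (ContinuousLinearMap.adjoint (D i))
      (phiH ε (‖D i x‖ ^ 2) • D i w
        + (phiH' ε (‖D i x‖ ^ 2) * (2 * ⟪D i x, D i w⟫)) • D i x), w⟫ := by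
    apply Finset.sum_nonneg
    intro i _
    rw [real_inner_smul_left, ContinuousLinearMap.adjoint_inner_left]
    apply mul_nonneg (hlam i)
    rw [inner_add_left, real_inner_smul_left, real_inner_smul_left,
      real_inner_self_eq_norm_sq]
    have hA := phiH_nonneg hε (s := ‖D i x‖ ^ 2) (by positivity)
    have hB := phiH'_nonpos hε (‖D i x‖ ^ 2)
    have hC := phiH_key hε (s := ‖D i x‖ ^ 2) (by positivity)
    have hCS : ⟪D i x, D i w⟫ * ⟪D i x, D i w⟫ ≤ ‖D i x‖ ^ 2 * ‖D i w‖ ^ 2 := by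
      have := real_inner_mul_inner_self_le (D i x) (D i w)
      rwa [real_inner_self_eq_norm_sq, real_inner_self_eq_norm_sq] at this
    nlinarith [mul_nonneg (neg_nonneg.2 hB) (sub_nonneg.2 hCS),
      mul_nonneg hC (sq_nonneg ‖D i w‖), sq_nonneg ‖D i w‖]
  linarith
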